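/- arXiv:1002.4598 — 4 statements merged into one kernel-verified Lean document; each statement's English description precedes it below -/
import Mathlib

section
/- For a morphism α on {a,b}* defined by α(a) = a^p b and α(b) = a^{p'} b with p, p' ≥ 1 and |p − p'| = 1, and any binary word u: u = g^k for a primitive word g and integer k ≥ 1 if and only if α(u) = G^k where G = α(g) and G is primitive. -/
/-- `listPow h m` is the word `h` repeated `m` times. -/
def listPow (h : List Bool) (m : ℕ) : List Bool := (List.replicate m h).flatten

/-- A word is primitive if it is not `h^m` for any word `h` and integer `m ≥ 2`. -/
def Primitive (g : List Bool) : Prop := ∀ h m, 2 ≤ m → g ≠ listPow h m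

/-- The Sturmian morphism on letters: `a ↦ a^p b`, `b ↦ a^{p'} b`
(`a` is `false`, `b` is `true`). -/
def alphaMap (p p' : ℕ) : Bool → List Bool
  | false => List.replicate p false ++ [true]
  | true  => List.replicate p' false ++ [true]

/-- The Sturmian morphism extended to words. -/
def alpha (p p' : ℕ) (w : List Bool) : List Bool := w.flatMap (alphaMap p p')

/-- A valid parameter pair: `p, p' ≥ 1` and `|p − p'| = 1`. -/
def ValidPair (p p' : ℕ) : Prop := 1 ≤ p ∧ 1 ≤ p' ∧ (p = p' + 1 ∨ p' = p + 1)

/-- A finite binary word is balanced if any two equal-length factors have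
`b`-counts differing by at most 1. -/
def BalancedFin (w : List Bool) : Prop :=
  ∀ u v : List Bool, u <:+: w → v <:+: w → u.length = v.length →
    u.count true ≤ v.count true + 1

/-- The factor of the infinite word `w` of length `n` starting at position `i`. -/
def infFactorAt (w : ℕ → Bool) (i n : ℕ) : List Bool :=
  (List.range n).map (fun k => w (i + k))

/-- `u` is a factor of the infinite word `w`. -/
def InfFactor (u : List Bool) (w : ℕ → Bool) : Prop :=
  ∃ i, u = infFactorAt w i u.length

/-- An infinite binary word is balanced if any two equal-length factors have
`b`-counts differing by at most 1. -/
def BalancedInf (w : ℕ → Bool) : Prop :=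
  ∀ u v : List Bool, InfFactor u w → InfFactor v w → u.length = v.length →
    u.count true ≤ v.count true + 1

/-- Ultimately periodic infinite word. -/
def UltPeriodic (w : ℕ → Bool) : Prop :=
  ∃ N q, 1 ≤ q ∧ ∀ n, N ≤ n → w (n + q) = w n

/-!
Since `p ≠ p'`, the blocks `a^p b` and `a^{p'} b` are distinct, and each contains a single `b`,
at its end. Hence `α` is injective, and every prefix of `α(g)` ending in `b` is the image of a
prefix of `g`. If `α(g) = H^m` with `m ≥ 2`, then `H` ends in `b`, so `H = α(h)` for some `h`,
and injectivity gives `g = h^m`. The converse direction and the equivalence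
`u = g^k ↔ α(u) = α(g)^k` are injectivity of `α` together with `α(g^k) = α(g)^k`.
-/

lemma listPow_succ (g : List Bool) (m : ℕ) : listPow g (m + 1) = g ++ listPow g m := by
  simp [listPow, List.replicate_succ]

lemma listPow_succ' (g : List Bool) (m : ℕ) : listPow g (m + 1) = listPow g m ++ g := by
  simp [listPow, List.replicate_succ']

lemma List.replicate_append_cons_inj {α : Type*} {a b : α} (hab : a ≠ b) {m n : ℕ}
    {X Y : List α} (h : replicate m a ++ b :: X = replicate n a ++ b :: Y) : m = n ∧ X = Y := by
  induction m generalizing n with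
  | zero => cases n <;> simp_all [replicate_succ, hab.symm]
  | succ m ih =>
    cases n with
    | zero => simp [replicate_succ, hab] at h
    | succ n => simpa [replicate_succ] using ih (by simpa [replicate_succ] using h)

section Morphism

variable (p p' : ℕ)

lemma alpha_append (x y : List Bool) : alpha p p' (x ++ y) = alpha p p' x ++ alpha p p' y :=
  List.flatMap_append

lemma alpha_listPow (g : List Bool) (m : ℕ) :
    alpha p p' (listPow g m) = listPow (alpha p p' g) m := by
  induction m with
  | zero => rfl
  | succ m ih => rw [listPow_succ, listPow_succ, alpha_append, ih]

@[simp]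
lemma alpha_nil : alpha p p' [] = [] := rfl

@[simp]
lemma alpha_eq_nil_iff {w : List Bool} : alpha p p' w = [] ↔ w = [] := by
  cases w with
  | nil => simp [alpha]
  | cons c w => cases c <;> simp [alpha, alphaMap]

lemma alphaMap_append (c : Bool) (L : List Bool) :
    alphaMap p p' c ++ L = List.replicate (cond c p' p) false ++ true :: L := by
  cases c <;> simp [alphaMap]

lemma getLast?_alpha {w : List Bool} (hw : w ≠ []) : (alpha p p' w).getLast? = some true := by
  obtain ⟨v, c, rfl⟩ := List.eq_nil_or_concat' w |>.resolve_left hw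
  cases c <;> simp [alpha, alphaMap]

variable {p p'}

lemma alpha_injective (hne : p ≠ p') : Function.Injective (alpha p p') := by
  intro u
  induction u with
  | nil => intro v hv; simpa using hv.symm
  | cons c u ih =>
    intro v hv
    cases v with
    | nil => simp at hv
    | cons d v =>
      have hblocks : alphaMap p p' c ++ alpha p p' u = alphaMap p p' d ++ alpha p p' v := hv
      rw [alphaMap_append, alphaMap_append] at hblocks
      obtain ⟨hexp, huv⟩ := List.replicate_append_cons_inj Bool.false_ne_true hblocks
      have hcd : c = d := by cases c <;> cases d <;> simp_all [eq_comm]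
      rw [hcd, ih huv]

lemma eq_nil_of_alphaMap_eq_append {c : Bool} {H T : List Bool} (hH : H.getLast? = some true)
    (h : alphaMap p p' c = H ++ T) : T = [] := by
  by_contra hT
  have hcount : (alphaMap p p' c).count true = 1 := by
    cases c <;> simp [alphaMap, List.count_replicate]
  have hTlast : T.getLast? = some true := by
    have : (alphaMap p p' c).getLast? = some true := by cases c <;> simp [alphaMap]
    rwa [h, List.getLast?_append_of_ne_nil _ hT] at this
  have hHpos := List.count_pos_iff.2 (List.mem_of_getLast? hH)
  have hTpos := List.count_pos_iff.2 (List.mem_of_getLast? hTlast)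
  rw [h, List.count_append] at hcount
  omega

lemma exists_alpha_eq_of_append_eq_alpha {g H T : List Bool} (hH : H.getLast? = some true)
    (h : H ++ T = alpha p p' g) : ∃ x y, g = x ++ y ∧ H = alpha p p' x ∧ T = alpha p p' y := by
  induction g generalizing H with
  | nil => simp_all
  | cons c g ih =>
    rcases List.append_eq_append_iff.1 (h : H ++ T = alphaMap p p' c ++ alpha p p' g) with
      ⟨A, hA, hT⟩ | ⟨B, rfl, hg⟩
    · obtain rfl := eq_nil_of_alphaMap_eq_append hH hA
      exact ⟨[c], g, rfl, by simpa [alpha] using hA.symm, hT⟩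
    · rcases eq_or_ne B [] with rfl | hB
      · exact ⟨[c], g, rfl, by simp [alpha], (hg.trans T.nil_append).symm⟩
      · rw [List.getLast?_append_of_ne_nil _ hB] at hH
        obtain ⟨x, y, rfl, rfl, rfl⟩ := ih hH hg.symm
        exact ⟨c :: x, y, rfl, by simp [alpha], rfl⟩

end Morphism

lemma Primitive.ne_nil {g : List Bool} (hg : Primitive g) : g ≠ [] := by
  rintro rfl
  exact hg [] 2 le_rfl rfl

lemma primitive_alpha_iff {p p' : ℕ} (hne : p ≠ p') {g : List Bool} :
    Primitive (alpha p p' g) ↔ Primitive g := by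
  refine ⟨fun hg x m hm hgx => hg (alpha p p' x) m hm (by rw [hgx, alpha_listPow]), ?_⟩
  intro hg H m hm hgH
  obtain ⟨m, rfl⟩ : ∃ n, m = n + 1 := ⟨m - 1, by omega⟩
  have hH : H.getLast? = some true := by
    have hlast := getLast?_alpha p p' hg.ne_nil
    rw [hgH, listPow_succ'] at hlast
    rcases eq_or_ne H [] with rfl | hH
    · simp [listPow] at hlast
    · rwa [List.getLast?_append_of_ne_nil _ hH] at hlast
  obtain ⟨x, y, -, rfl, -⟩ := exists_alpha_eq_of_append_eq_alpha hH (by rw [← listPow_succ, hgH])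
  exact hg x (m + 1) hm (alpha_injective hne (by rw [hgH, alpha_listPow]))

theorem stmt0_general (p p' : ℕ) (h : ValidPair p p') (u g : List Bool) (k : ℕ) :
    (u = listPow g k ∧ Primitive g) ↔
      (alpha p p' u = listPow (alpha p p' g) k ∧ Primitive (alpha p p' g)) := by
  have hne : p ≠ p' := by obtain ⟨-, -, h | h⟩ := h <;> omega
  rw [primitive_alpha_iff hne, ← alpha_listPow, (alpha_injective hne).eq_iff]

theorem stmt0 (p p' : ℕ) (h : ValidPair p p') (u g : List Bool) (k : ℕ) (hk : 1 ≤ k) :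
    (u = listPow g k ∧ Primitive g) ↔
      (alpha p p' u = listPow (alpha p p' g) k ∧ Primitive (alpha p p' g)) :=
  stmt0_general p p' h u g k
end

section
/- Let α be the morphism on {a,b}* with α(a) = a^p b and α(b) = a^{p'} b where p, p' ≥ 1 and |p − p'| = 1. Then α maps balanced words to balanced words: if u is balanced, so is α(u). -/
open List

theorem List.take_drop_infix {β : Type*} (l : List β) (k d : ℕ) : (l.drop k).take d <:+: l :=
  (take_prefix d _).isInfix.trans (drop_suffix k l).isInfix

theorem List.IsInfix.exists_eq_take_drop {β : Type*} {x l : List β} (h : x <:+: l) :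
    ∃ s, s + x.length ≤ l.length ∧ x = (l.drop s).take x.length := by
  obtain ⟨pre, suf, rfl⟩ := h
  refine ⟨pre.length, by simp, ?_⟩
  rw [append_assoc, drop_left' rfl, take_left' rfl]

theorem List.count_take_lt_count_concat {β : Type*} [BEq β] [LawfulBEq β] {l : List β} {a : β}
    {s : ℕ} (hs : s < (l ++ [a]).length) : ((l ++ [a]).take s).count a < (l ++ [a]).count a := by
  rw [take_append_of_le_length (by simpa using hs), count_append, count_singleton_self]
  exact Nat.lt_succ_of_le ((take_prefix s l).count_le a)

def FlatMapLengthBalanced {α β : Type*} (f : α → List β) (u : List α) : Prop :=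
  ∀ v v', v <:+: u → v' <:+: u → v.length = v'.length →
    (v.flatMap f).length ≤ (v'.flatMap f).length + 1

section Blocks

variable {α : Type*} {f : α → List Bool}

def IsBlockMap (f : α → List Bool) : Prop := ∀ x, ∃ m, f x = replicate m false ++ [true]

theorem IsBlockMap.count_true_flatMap (hf : IsBlockMap f) (v : List α) :
    (v.flatMap f).count true = v.length := by
  induction v with
  | nil => rfl
  | cons x v ih =>
    obtain ⟨m, hm⟩ := hf x
    simp [count_append, ih, hm, count_replicate]

theorem IsBlockMap.exists_flatMap_eq_concat (hf : IsBlockMap f) {v : List α} (hv : v ≠ []) :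
    ∃ L, v.flatMap f = L ++ [true] := by
  obtain ⟨m, hm⟩ := hf (v.getLast hv)
  refine ⟨v.dropLast.flatMap f ++ replicate m false, ?_⟩
  conv_lhs => rw [← dropLast_append_getLast hv]
  simp [hm]

theorem IsBlockMap.length_flatMap_dropLast_lt (hf : IsBlockMap f) {v : List α} (hv : v ≠ []) :
    (v.dropLast.flatMap f).length < (v.flatMap f).length := by
  obtain ⟨m, hm⟩ := hf (v.getLast hv)
  conv_rhs => rw [← dropLast_append_getLast hv]
  simp [hm]

theorem take_flatMap_length_take (u : List α) (k : ℕ) :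
    (u.flatMap f).take ((u.take k).flatMap f).length = (u.take k).flatMap f := by
  nth_rewrite 2 [← take_append_drop k u]
  rw [flatMap_append, take_left' rfl]

theorem length_flatMap_take_add (u : List α) (k d : ℕ) :
    ((u.take (k + d)).flatMap f).length =
      ((u.take k).flatMap f).length + (((u.drop k).take d).flatMap f).length := by
  simp [take_add, flatMap_append]

theorem IsBlockMap.length_flatMap_take_le_iff (hf : IsBlockMap f) {u : List α} {k : ℕ}
    (hk : k ≤ u.length) (s : ℕ) :
    ((u.take k).flatMap f).length ≤ s ↔ k ≤ ((u.flatMap f).take s).count true := by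
  have hcount : ((u.take k).flatMap f).count true = k := by
    rw [hf.count_true_flatMap, length_take]
    omega
  constructor
  · intro h
    calc k = ((u.flatMap f).take ((u.take k).flatMap f).length).count true := by
          rw [take_flatMap_length_take, hcount]
      _ ≤ _ := (take_prefix_take_left h).count_le _
  · intro h
    by_contra! hlt
    have hne : u.take k ≠ [] := by
      rintro h0
      simp [h0] at hlt
    obtain ⟨L, hL⟩ := hf.exists_flatMap_eq_concat hne
    have : ((u.flatMap f).take s).count true < k :=
      calc ((u.flatMap f).take s).count true
          = (((u.take k).flatMap f).take s).count true := by
            conv_rhs => rw [← take_flatMap_length_take u k]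
            rw [take_take, min_eq_left hlt.le]
        _ < ((u.take k).flatMap f).count true := by
            rw [hL] at hlt ⊢
            exact count_take_lt_count_concat hlt
        _ = k := hcount
    omega

theorem IsBlockMap.count_true_take_flatMap_le (hf : IsBlockMap f) (u : List α) (s : ℕ) :
    ((u.flatMap f).take s).count true ≤ u.length :=
  hf.count_true_flatMap u ▸ (take_prefix s _).count_le true

theorem IsBlockMap.exists_infix_length_flatMap_lt (hf : IsBlockMap f) {u : List α}
    {x : List Bool} (hx : x <:+: u.flatMap f) {t : ℕ} (ht : t + 2 ≤ x.count true) :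
    ∃ v, v <:+: u ∧ v.length = t + 1 ∧ (v.flatMap f).length < x.length := by
  obtain ⟨s, -, hxs⟩ := hx.exists_eq_take_drop
  set k := ((u.flatMap f).take s).count true
  have hcount : ((u.flatMap f).take (s + x.length)).count true = k + x.count true := by
    rw [take_add, count_append, ← hxs]
  have hend := hf.count_true_take_flatMap_le u (s + x.length)
  -- `x` starts inside block `k` and ends after block `k + t + 1`, so it contains blocks
  -- `k + 1, …, k + t + 1` and the `b` of block `k`.
  have hstart : s < ((u.take (k + 1)).flatMap f).length := by
    by_contra! h
    have := (hf.length_flatMap_take_le_iff (k := k + 1) (by omega) s).1 h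
    omega
  have hstop : ((u.take (k + 1 + (t + 1))).flatMap f).length ≤ s + x.length :=
    (hf.length_flatMap_take_le_iff (by omega) _).2 (by omega)
  refine ⟨(u.drop (k + 1)).take (t + 1), take_drop_infix u _ _, by rw [length_take, length_drop]; omega, ?_⟩
  rw [length_flatMap_take_add] at hstop
  omega

theorem IsBlockMap.exists_infix_length_flatMap_cover (hf : IsBlockMap f) {u : List α}
    {y : List Bool} (hy : y <:+: u.flatMap f) :
    (∃ v, v <:+: u ∧ v.length = y.count true + 1 ∧ y.length < (v.flatMap f).length) ∨
      (∃ v, v <:+: u ∧ v.length = y.count true ∧ y.length ≤ (v.flatMap f).length) := by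
  obtain ⟨s, hs, hys⟩ := hy.exists_eq_take_drop
  set k := ((u.flatMap f).take s).count true
  set t := y.count true
  have hcount : ((u.flatMap f).take (s + y.length)).count true = k + t := by
    rw [take_add, count_append, ← hys]
  have hend := hf.count_true_take_flatMap_le u (s + y.length)
  -- `y` starts inside block `k` and ends before the `b` of block `k + t`, if that block exists.
  have hstart : ((u.take k).flatMap f).length ≤ s :=
    (hf.length_flatMap_take_le_iff (by omega) s).2 le_rfl
  by_cases hroom : k + (t + 1) ≤ u.length
  · left
    have hstop : s + y.length < ((u.take (k + (t + 1))).flatMap f).length := by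
      by_contra! h
      have := (hf.length_flatMap_take_le_iff hroom _).1 h
      omega
    refine ⟨(u.drop k).take (t + 1), take_drop_infix u _ _, by rw [length_take, length_drop]; omega, ?_⟩
    rw [length_flatMap_take_add] at hstop
    omega
  · right
    have hstop : ((u.take (k + t)).flatMap f).length = (u.flatMap f).length := by
      rw [take_of_length_le (by omega)]
    refine ⟨(u.drop k).take t, take_drop_infix u _ _, by rw [length_take, length_drop]; omega, ?_⟩
    rw [length_flatMap_take_add] at hstop
    omega

theorem IsBlockMap.balancedFin_flatMap (hf : IsBlockMap f) {u : List α}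
    (hu : FlatMapLengthBalanced f u) : BalancedFin (u.flatMap f) := by
  intro x y hx hy hxy
  by_contra! hlt
  obtain ⟨v, hvu, hvlen, hv⟩ := hf.exists_infix_length_flatMap_lt hx (t := y.count true) hlt
  rcases hf.exists_infix_length_flatMap_cover hy with
    ⟨v', hv'u, hv'len, hv'⟩ | ⟨v', hv'u, hv'len, hv'⟩
  · have := hu v' v hv'u hvu (by omega)
    omega
  · have hne : v ≠ [] := ne_nil_of_length_eq_add_one hvlen
    have := hf.length_flatMap_dropLast_lt hne
    have := hu v' v.dropLast hv'u ((dropLast_prefix v).isInfix.trans hvu) (by rw [length_dropLast]; omega)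
    omega

end Blocks

theorem isBlockMap_alphaMap (p p' : ℕ) : IsBlockMap (alphaMap p p')
  | false => ⟨p, rfl⟩
  | true => ⟨p', rfl⟩

theorem length_alpha (p p' : ℕ) (v : List Bool) :
    (alpha p p' v).length = (p + 1) * v.count false + (p' + 1) * v.count true := by
  induction v with
  | nil => rfl
  | cons x v ih =>
    cases x <;> simp [alpha, alphaMap] at ih ⊢ <;> rw [ih] <;> ring

theorem BalancedFin.count_false_le {u v v' : List Bool} (hu : BalancedFin u) (hv : v <:+: u)
    (hv' : v' <:+: u) (hlen : v.length = v'.length) : v.count false ≤ v'.count false + 1 := by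
  have := hu v' v hv' hv hlen.symm
  have := count_false_add_count_true v
  have := count_false_add_count_true v'
  omega

theorem flatMapLengthBalanced_alphaMap {p p' : ℕ} (h : ValidPair p p') {u : List Bool}
    (hu : BalancedFin u) : FlatMapLengthBalanced (alphaMap p p') u := by
  intro v v' hv hv' hlen
  change (alpha p p' v).length ≤ (alpha p p' v').length + 1
  rw [length_alpha, length_alpha]
  have hv_len := count_false_add_count_true v
  have hv'_len := count_false_add_count_true v'
  obtain ⟨-, -, rfl | rfl⟩ := h
  · have := hu.count_false_le hv hv' hlen
    nlinarith
  · have := hu v v' hv hv' hlen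
    nlinarith

/-- the Sturmian morphism maps balanced words to balanced words. -/
theorem stmt3 (p p' : ℕ) (h : ValidPair p p') (u : List Bool) (hu : BalancedFin u) :
    BalancedFin (alpha p p' u) :=
  (isBlockMap_alphaMap p p').balancedFin_flatMap (flatMapLengthBalanced_alphaMap h hu)
end

section
/- Every Sturmian word over {a,b} contains, for every n ≥ 1, a factor of the form g^2 with |g| ≥ n; i.e., Sturmian words contain squares of arbitrarily long periods. -/
/-! In a balanced word some letter `c` never occurs twice in a row, and balance forces the
distances between consecutive occurrences of `c` to be at least `2` and to take only two
consecutive values `k, k + 1`. Writing one bit per distance gives the derived word, which is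
again balanced and aperiodic, and a square of period `L` in the derived word spells out a square
of period at least `2 L` in the original word. Starting from a square of period `≥ 1`, which the
first four letters of any binary word contain, the period can be doubled as often as needed. -/

open Nat

theorem length_infFactorAt (w : ℕ → Bool) (i n : ℕ) : (infFactorAt w i n).length = n := by
  simp [infFactorAt]

theorem infFactor_infFactorAt (w : ℕ → Bool) (i n : ℕ) : InfFactor (infFactorAt w i n) w :=
  ⟨i, by rw [length_infFactorAt]⟩

theorem infFactorAt_add (w : ℕ → Bool) (i m n : ℕ) :
    infFactorAt w i (m + n) = infFactorAt w i m ++ infFactorAt w (i + m) n := by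
  simp only [infFactorAt, List.range_add, List.map_append, List.map_map]
  congr 1
  exact List.map_congr_left fun t _ => by simp [Nat.add_assoc]

theorem infFactorAt_succ (w : ℕ → Bool) (i n : ℕ) :
    infFactorAt w i (n + 1) = infFactorAt w i n ++ [w (i + n)] := by
  simp [infFactorAt, List.range_succ]

theorem infFactorAt_eq_iff {w w' : ℕ → Bool} {i j n : ℕ} :
    infFactorAt w i n = infFactorAt w' j n ↔ ∀ t < n, w (i + t) = w' (j + t) := by
  simp [infFactorAt, List.map_inj_left]

theorem count_infFactorAt (w : ℕ → Bool) (c : Bool) (i n : ℕ) :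
    (infFactorAt w i n).count c = count (w · = c) (i + n) - count (w · = c) i := by
  rw [count_add, Nat.add_sub_cancel_left]
  induction n with
  | zero => simp [infFactorAt]
  | succ n ih =>
    rw [infFactorAt_succ, List.count_append, ih, count_succ, List.count_singleton]
    simp

def HasSquareAt (w : ℕ → Bool) (i P : ℕ) : Prop := ∀ t < P, w (i + t) = w (i + P + t)

theorem HasSquareAt.infFactor {w : ℕ → Bool} {i P : ℕ} (h : HasSquareAt w i P) :
    InfFactor (infFactorAt w i P ++ infFactorAt w i P) w := by
  refine ⟨i, ?_⟩
  rw [List.length_append, length_infFactorAt, infFactorAt_add]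
  exact congrArg _ (infFactorAt_eq_iff.2 h)

theorem exists_hasSquareAt_one (w : ℕ → Bool) : ∃ i P, 1 ≤ P ∧ HasSquareAt w i P := by
  have : ∀ a b c d : Bool, a = b ∨ b = c ∨ c = d ∨ (a = c ∧ b = d) := by decide
  rcases this (w 0) (w 1) (w 2) (w 3) with h | h | h | ⟨h₀, h₁⟩
  · exact ⟨0, 1, le_rfl, by simpa [HasSquareAt]⟩
  · exact ⟨1, 1, le_rfl, by simpa [HasSquareAt]⟩
  · exact ⟨2, 1, le_rfl, by simpa [HasSquareAt]⟩
  · exact ⟨0, 2, by norm_num, fun t ht => by interval_cases t <;> simpa⟩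

theorem BalancedInf.count_le {w : ℕ → Bool} (hbal : BalancedInf w) (c : Bool) (i j n : ℕ) :
    (infFactorAt w i n).count c ≤ (infFactorAt w j n).count c + 1 := by
  cases c
  · have h := hbal _ _ (infFactor_infFactorAt w j n) (infFactor_infFactorAt w i n)
      (by simp only [length_infFactorAt])
    have hi := List.count_false_add_count_true (infFactorAt w i n)
    have hj := List.count_false_add_count_true (infFactorAt w j n)
    simp only [length_infFactorAt] at hi hj
    omega
  · exact hbal _ _ (infFactor_infFactorAt w i n) (infFactor_infFactorAt w j n)
      (by simp only [length_infFactorAt])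

theorem BalancedInf.count_sub_count_le {w : ℕ → Bool} (hbal : BalancedInf w) (c : Bool)
    (i j n : ℕ) :
    count (w · = c) (i + n) - count (w · = c) i ≤
      count (w · = c) (j + n) - count (w · = c) j + 1 := by
  simpa only [count_infFactorAt] using hbal.count_le c i j n

theorem balancedInf_of_count_le {w : ℕ → Bool}
    (h : ∀ i j n, (infFactorAt w i n).count true ≤ (infFactorAt w j n).count true + 1) :
    BalancedInf w := by
  rintro u v ⟨i, hu⟩ ⟨j, hv⟩ hlen
  rw [hu, hv, ← hlen]
  exact h i j u.length

theorem BalancedInf.exists_not_doubled {w : ℕ → Bool} (hbal : BalancedInf w) :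
    ∃ c, ∀ i, w i = c → w (i + 1) ≠ c := by
  by_contra! h
  obtain ⟨i, hi, hi'⟩ := h true
  obtain ⟨j, hj, hj'⟩ := h false
  have := hbal.count_le true i j 2
  simp [infFactorAt, List.range_succ, hi, hi', hj, hj'] at this

theorem infinite_setOf_eq_of_not_ultPeriodic {w : ℕ → Bool} (hap : ¬UltPeriodic w) (c : Bool) :
    {j | w j = c}.Infinite := by
  intro hfin
  obtain ⟨N, hN⟩ := hfin.bddAbove
  refine hap ⟨N + 1, 1, le_rfl, fun n hn => ?_⟩
  have h₀ : w n ≠ c := fun h => by have := hN h; omega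
  have h₁ : w (n + 1) ≠ c := fun h => by have := hN h; omega
  revert h₀ h₁
  cases w n <;> cases w (n + 1) <;> cases c <;> simp

theorem exists_forall_eq_or_eq_succ {f : ℕ → ℕ} (h : ∀ i j, f i ≤ f j + 1) :
    ∃ k, ∀ i, f i = k ∨ f i = k + 1 := by
  obtain ⟨j, hj⟩ : sInf (Set.range f) ∈ Set.range f := Nat.sInf_mem (Set.range_nonempty f)
  refine ⟨f j, fun i => ?_⟩
  have hji : f j ≤ f i := hj ▸ Nat.sInf_le ⟨i, rfl⟩
  have := h i j
  omega

section Occurrences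

variable {p : ℕ → Prop}

noncomputable def nthGap (p : ℕ → Prop) (i : ℕ) : ℕ := nth p (i + 1) - nth p i

/-- If the `L`-th occurrence after the one at `nth p a` came more than one step later than
after `nth p b`, the window from `nth p b` to `nth p (b + L)` would hold `L + 1` occurrences and
the equally long window just after `nth p a` at most `L - 1`. -/
theorem nth_add_sub_nth_le [DecidablePred p] (hp : (Set.ofPred p).Infinite)
    (hbal : ∀ i j n, count p (i + n) - count p i ≤ count p (j + n) - count p j + 1)
    (a b L : ℕ) : nth p (a + L) - nth p a ≤ nth p (b + L) - nth p b + 1 := by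
  rcases Nat.eq_zero_or_pos L with rfl | hL
  · simp
  by_contra! hlt
  have hb := nth_monotone hp (Nat.le_add_right b L)
  have hwin := hbal (nth p b) (nth p a + 1) (nth p (b + L) - nth p b + 1)
  have hlong : count p (nth p b + (nth p (b + L) - nth p b + 1)) = b + L + 1 := by
    rw [show nth p b + (nth p (b + L) - nth p b + 1) = nth p (b + L) + 1 by omega,
      count_nth_succ_of_infinite hp]
  have hshort : count p (nth p a + 1 + (nth p (b + L) - nth p b + 1)) ≤ a + L := by
    rw [← count_nth_of_infinite hp (a + L)]
    exact count_monotone p (by omega)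
  rw [hlong, count_nth_of_infinite hp, count_nth_succ_of_infinite hp] at hwin
  omega

theorem le_nth_add_sub_nth (hp : (Set.ofPred p).Infinite) {m : ℕ} (hm : ∀ i, m ≤ nthGap p i)
    (a L : ℕ) : m * L ≤ nth p (a + L) - nth p a := by
  induction L with
  | zero => simp
  | succ L ih =>
    have h₀ := nth_monotone hp (Nat.le_add_right a L)
    have h₁ := nth_monotone hp (Nat.le_add_right (a + L) 1)
    have := hm (a + L)
    unfold nthGap at this
    rw [← Nat.add_assoc, Nat.mul_add_one]
    omega

theorem nth_add_add_nth_eq (hp : (Set.ofPred p).Infinite) {a b L : ℕ}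
    (hgap : ∀ t < L, nthGap p (a + t) = nthGap p (b + t)) :
    ∀ t ≤ L, nth p (a + t) + nth p b = nth p (b + t) + nth p a := by
  intro t ht
  induction t with
  | zero => simp [Nat.add_comm]
  | succ t ih =>
    have h := hgap t ht
    have ha := nth_monotone hp (Nat.le_add_right (a + t) 1)
    have hb := nth_monotone hp (Nat.le_add_right (b + t) 1)
    unfold nthGap at h
    rw [← Nat.add_assoc, ← Nat.add_assoc]
    have := ih (by omega)
    omega

theorem mem_shift_of_nth_add_add_nth_eq (hp : (Set.ofPred p).Infinite) {a b L : ℕ}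
    (hspan : ∀ t ≤ L, nth p (a + t) + nth p b = nth p (b + t) + nth p a) {s : ℕ}
    (hs : nth p a + s < nth p (a + L)) (h : p (nth p a + s)) : p (nth p b + s) := by
  obtain ⟨t, ht⟩ := subset_range_nth h
  have hat : a ≤ t := (nth_le_nth hp).1 (by omega)
  have htL : t < a + L := (nth_lt_nth hp).1 (by omega)
  obtain ⟨u, rfl⟩ := Nat.exists_eq_add_of_le hat
  have := hspan u (by omega)
  convert nth_mem_of_infinite hp (b + u) using 1
  omega

end Occurrences

section DerivedWord

variable {w : ℕ → Bool} {c : Bool} {k : ℕ}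

theorem eq_shift_of_nthGap_eq (hp : {j | w j = c}.Infinite) {a b L : ℕ}
    (hgap : ∀ t < L, nthGap (w · = c) (a + t) = nthGap (w · = c) (b + t)) {s : ℕ}
    (hs : nth (w · = c) a + s < nth (w · = c) (a + L)) :
    w (nth (w · = c) a + s) = w (nth (w · = c) b + s) := by
  have hspan := nth_add_add_nth_eq hp hgap
  have hs' : nth (w · = c) b + s < nth (w · = c) (b + L) := by have := hspan L le_rfl; omega
  have hab := mem_shift_of_nth_add_add_nth_eq hp hspan hs
  have hba := mem_shift_of_nth_add_add_nth_eq hp (fun t ht => (hspan t ht).symm) hs'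
  revert hab hba
  cases w (nth (w · = c) a + s) <;> cases w (nth (w · = c) b + s) <;> cases c <;> simp

noncomputable def derivedWord (w : ℕ → Bool) (c : Bool) (k : ℕ) : ℕ → Bool :=
  fun i => decide (nthGap (w · = c) i = k + 1)

theorem nthGap_eq_derivedWord (hk : ∀ i, nthGap (w · = c) i = k ∨ nthGap (w · = c) i = k + 1)
    (i : ℕ) : nthGap (w · = c) i = k + (derivedWord w c k i).toNat := by
  rcases hk i with h | h <;> simp [derivedWord, h]

theorem nth_add_sub_nth_eq_count_derivedWord (hp : {j | w j = c}.Infinite)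
    (hk : ∀ i, nthGap (w · = c) i = k ∨ nthGap (w · = c) i = k + 1) (a L : ℕ) :
    nth (w · = c) (a + L) - nth (w · = c) a =
      k * L + (infFactorAt (derivedWord w c k) a L).count true := by
  induction L with
  | zero => simp [infFactorAt]
  | succ L ih =>
    have h₀ := nth_monotone hp (Nat.le_add_right a L)
    have h₁ := nth_monotone hp (Nat.le_add_right (a + L) 1)
    have hgap := nthGap_eq_derivedWord hk (a + L)
    unfold nthGap at hgap
    have hlast : [derivedWord w c k (a + L)].count true = (derivedWord w c k (a + L)).toNat := by
      cases derivedWord w c k (a + L) <;> rfl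
    rw [infFactorAt_succ, List.count_append, hlast, ← Nat.add_assoc, Nat.mul_add_one]
    omega

theorem balancedInf_derivedWord (hbal : BalancedInf w) (hp : {j | w j = c}.Infinite)
    (hk : ∀ i, nthGap (w · = c) i = k ∨ nthGap (w · = c) i = k + 1) :
    BalancedInf (derivedWord w c k) := by
  refine balancedInf_of_count_le fun i j L => ?_
  have hspan := nth_add_sub_nth_le hp (hbal.count_sub_count_le c) i j L
  rw [nth_add_sub_nth_eq_count_derivedWord hp hk,
    nth_add_sub_nth_eq_count_derivedWord hp hk] at hspan
  omega

theorem ultPeriodic_of_derivedWord (hp : {j | w j = c}.Infinite)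
    (hk : ∀ i, nthGap (w · = c) i = k ∨ nthGap (w · = c) i = k + 1)
    (h : UltPeriodic (derivedWord w c k)) : UltPeriodic w := by
  obtain ⟨N, Q, hQ, hper⟩ := h
  have hgap : ∀ t, nthGap (w · = c) (N + t) = nthGap (w · = c) (N + Q + t) := fun t => by
    rw [nthGap_eq_derivedWord hk, nthGap_eq_derivedWord hk, Nat.add_right_comm,
      hper (N + t) (Nat.le_add_right N t)]
  have hgrowth : ∀ t, nth (w · = c) N + t ≤ nth (w · = c) (N + t) := fun t => by
    have := (nth_strictMono hp).add_le_nat t N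
    rwa [Nat.add_comm t N, Nat.add_comm t] at this
  have hQ' := hgrowth Q
  refine ⟨nth (w · = c) N, nth (w · = c) (N + Q) - nth (w · = c) N, by omega, fun n hn => ?_⟩
  obtain ⟨s, rfl⟩ := Nat.exists_eq_add_of_le hn
  have hs : nth (w · = c) N + s < nth (w · = c) (N + (s + 1)) := by
    have := hgrowth (s + 1); omega
  rw [eq_shift_of_nthGap_eq hp (fun t _ => hgap t) hs]
  congr 1
  omega

theorem HasSquareAt.of_derivedWord (hp : {j | w j = c}.Infinite)
    (hk : ∀ i, nthGap (w · = c) i = k ∨ nthGap (w · = c) i = k + 1) {i L : ℕ}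
    (h : HasSquareAt (derivedWord w c k) i L) :
    HasSquareAt w (nth (w · = c) i) (nth (w · = c) (i + L) - nth (w · = c) i) := by
  have hgap : ∀ t < L, nthGap (w · = c) (i + t) = nthGap (w · = c) (i + L + t) := fun t ht => by
    rw [nthGap_eq_derivedWord hk, nthGap_eq_derivedWord hk, h t ht]
  have hmono := nth_monotone hp (Nat.le_add_right i L)
  intro s hs
  rw [show nth (w · = c) i + (nth (w · = c) (i + L) - nth (w · = c) i) = nth (w · = c) (i + L)
    by omega]
  exact eq_shift_of_nthGap_eq hp hgap (by omega)

end DerivedWord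

theorem exists_derived_balanced_word {w : ℕ → Bool} (hbal : BalancedInf w)
    (hap : ¬UltPeriodic w) :
    ∃ w' : ℕ → Bool, BalancedInf w' ∧ ¬UltPeriodic w' ∧
      ∀ i L, HasSquareAt w' i L → ∃ j P, 2 * L ≤ P ∧ HasSquareAt w j P := by
  obtain ⟨c, hc⟩ := hbal.exists_not_doubled
  have hp := infinite_setOf_eq_of_not_ultPeriodic hap c
  have two_le_nthGap : ∀ i, 2 ≤ nthGap (w · = c) i := fun i => by
    have hlt := nth_strictMono hp (Nat.lt_add_one i)
    by_contra! hgap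
    have hsucc : nth (w · = c) (i + 1) = nth (w · = c) i + 1 := by unfold nthGap at hgap; omega
    exact hc _ (nth_mem_of_infinite hp i) (hsucc ▸ nth_mem_of_infinite hp (i + 1))
  obtain ⟨k, hk⟩ := exists_forall_eq_or_eq_succ (f := nthGap (w · = c)) fun i j =>
    nth_add_sub_nth_le hp (hbal.count_sub_count_le c) i j 1
  refine ⟨derivedWord w c k, balancedInf_derivedWord hbal hp hk,
    fun hper => hap (ultPeriodic_of_derivedWord hp hk hper),
    fun i L hsq => ⟨_, _, ?_, hsq.of_derivedWord hp hk⟩⟩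
  simpa [Nat.mul_comm] using le_nth_add_sub_nth hp two_le_nthGap i L

theorem BalancedInf.exists_hasSquareAt {w : ℕ → Bool} (hbal : BalancedInf w)
    (hap : ¬UltPeriodic w) (n : ℕ) : ∃ i P, n ≤ P ∧ HasSquareAt w i P := by
  induction n using Nat.strong_induction_on generalizing w with
  | _ n ih =>
    rcases le_or_gt n 1 with hn | hn
    · obtain ⟨i, P, hP, h⟩ := exists_hasSquareAt_one w
      exact ⟨i, P, hn.trans hP, h⟩
    · obtain ⟨w', hbal', hap', hsq⟩ := exists_derived_balanced_word hbal hap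
      obtain ⟨i, L, hL, h⟩ := ih ((n + 1) / 2) (by omega) hbal' hap'
      obtain ⟨j, P, hP, h'⟩ := hsq i L h
      exact ⟨j, P, by omega, h'⟩

/-- Sturmian (balanced aperiodic) words contain squares of
arbitrarily long periods. -/
theorem stmt5 (w : ℕ → Bool) (hbal : BalancedInf w) (hap : ¬ UltPeriodic w) :
    ∀ n : ℕ, 1 ≤ n → ∃ g : List Bool, n ≤ g.length ∧ InfFactor (g ++ g) w := by
  intro n _
  obtain ⟨i, P, hP, h⟩ := hbal.exists_hasSquareAt hap n
  exact ⟨infFactorAt w i P, by rwa [length_infFactorAt], h.infFactor⟩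
end

section
/- The Fibonacci word (the fixed point of the morphism a ↦ ab, b ↦ a) contains no fourth power: there is no nonempty word g such that g^4 is a factor of the Fibonacci word. -/
/-- The Fibonacci morphism `a ↦ ab`, `b ↦ a`. -/
def phi : Bool → List Bool
  | false => [false, true]
  | true  => [false]

/-- Iterates of the Fibonacci morphism starting from `a`; their factors are
exactly the factors of the infinite Fibonacci word. -/
def fibWord : ℕ → List Bool
  | 0 => [false]
  | n + 1 => (fibWord n).flatMap phi

/-- `u` is a factor of the Fibonacci word. -/
def FibFactor (u : List Bool) : Prop := ∃ n, u <:+: fibWord n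

namespace FibAux

lemma phi_ne_nil (b : Bool) : phi b ≠ [] := by cases b <;> simp [phi]

lemma phi_head (b : Bool) : (phi b).getD 0 false = false := by cases b <;> simp [phi]

lemma flatMap_head (l : List Bool) (h : l ≠ []) :
    (l.flatMap phi).getD 0 false = false ∧ 1 ≤ (l.flatMap phi).length := by
  obtain ⟨c, l', rfl⟩ := List.exists_cons_of_ne_nil h
  rw [List.flatMap_cons]
  constructor
  · rw [List.getD_append _ _ _ _ (by cases c <;> simp [phi])]
    exact phi_head c
  · simp only [List.length_append]
    have := List.length_pos_iff.2 (phi_ne_nil c)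
    omega

lemma fibWord_ne_nil (n : ℕ) : fibWord n ≠ [] := by
  induction n with
  | zero => simp [fibWord]
  | succ n ih =>
    show (fibWord n).flatMap phi ≠ []
    intro h
    have := (flatMap_head (fibWord n) ih).2
    rw [h] at this; simp at this

lemma fibWord_prefix (n : ℕ) : fibWord n <+: fibWord (n+1) := by
  induction n with
  | zero => exact ⟨[true], rfl⟩
  | succ n ih =>
    show fibWord (n+1) <+: (fibWord (n+1)).flatMap phi
    obtain ⟨t, ht⟩ := ih
    show (fibWord n).flatMap phi <+: (fibWord (n+1)).flatMap phi
    rw [← ht, List.flatMap_append]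
    exact ⟨t.flatMap phi, rfl⟩

lemma fibWord_prefix_le {n m : ℕ} (h : n ≤ m) : fibWord n <+: fibWord m := by
  induction m with
  | zero => rw [Nat.le_zero.1 h]
  | succ m ih =>
    rcases Nat.lt_or_ge n (m+1) with h' | h'
    · exact (ih (by omega)).trans (fibWord_prefix m)
    · have : n = m + 1 := by omega
      rw [this]

lemma flatMap_phi_length (l : List Bool) :
    (l.flatMap phi).length = l.length + l.count false := by
  induction l with
  | nil => simp
  | cons c l ih =>
    rw [List.flatMap_cons, List.length_append, ih]
    cases c <;> simp [phi, List.count_cons] <;> omega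

lemma fibWord_length (n : ℕ) : n + 1 ≤ (fibWord n).length := by
  induction n with
  | zero => simp [fibWord]
  | succ n ih =>
    show _ ≤ ((fibWord n).flatMap phi).length
    rw [flatMap_phi_length]
    have h1 : 1 ≤ (fibWord n).count false := by
      obtain ⟨c, l', hcl⟩ := List.exists_cons_of_ne_nil (fibWord_ne_nil n)
      have hc : c = false := by
        have h0 := phi_head c
        have : (fibWord (n+1)).getD 0 false = false := by
          show ((fibWord n).flatMap phi).getD 0 false = false
          exact (flatMap_head _ (fibWord_ne_nil n)).1
        have hp := fibWord_prefix_le (Nat.zero_le n)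
        obtain ⟨t, ht⟩ := hp
        have : fibWord 0 = [false] := rfl
        rw [this] at ht
        rw [← ht] at hcl
        simpa using congrArg (fun l => l.getD 0 false) hcl.symm
      rw [hcl, hc]
      simp [List.count_cons]
    omega

/-- The infinite Fibonacci word. -/
def F (k : ℕ) : Bool := (fibWord (k+1)).getD k false

lemma getD_prefix {u v : List Bool} (h : u <+: v) {k : ℕ} (hk : k < u.length) :
    v.getD k false = u.getD k false := by
  obtain ⟨t, ht⟩ := h
  rw [← ht, List.getD_append _ _ _ _ hk]

lemma stab {n k : ℕ} (hk : k < (fibWord n).length) :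
    (fibWord n).getD k false = F k := by
  rcases Nat.le_total n (k+1) with h | h
  · exact (getD_prefix (fibWord_prefix_le h) hk).symm
  · exact getD_prefix (fibWord_prefix_le h) (by have := fibWord_length (k+1); omega)


/-- count of `false` (letters `a`) among `F 0, ..., F (n-1)`. -/
def cf : ℕ → ℕ
  | 0 => 0
  | n + 1 => cf n + (bif F n then 0 else 1)

/-- position of the start of the `t`-th block of the Fibonacci word. -/
def D (t : ℕ) : ℕ := t + cf t

lemma cf_succ (n : ℕ) : cf (n+1) = cf n + (bif F n then 0 else 1) := rfl

lemma cf_succ_false {n : ℕ} (h : F n = false) : cf (n+1) = cf n + 1 := by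
  rw [cf_succ, h]; rfl

lemma cf_succ_true {n : ℕ} (h : F n = true) : cf (n+1) = cf n := by
  rw [cf_succ, h]; rfl

lemma cf_mono {x y : ℕ} (h : x ≤ y) : cf x ≤ cf y := by
  induction y with
  | zero =>
    have : x = 0 := by omega
    rw [this]
  | succ y ih =>
    rcases Nat.lt_or_ge x (y+1) with h' | h'
    · have := ih (by omega)
      rw [cf_succ]; cases F y <;> simp <;> omega
    · have : x = y + 1 := by omega
      rw [this]

lemma cf_add_le (a b : ℕ) : cf (a + b) ≤ cf a + b := by
  induction b with
  | zero => simp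
  | succ b ih => rw [show a + (b+1) = (a+b)+1 from rfl, cf_succ]; cases F (a+b) <;> simp <;> omega

lemma lt_of_cf_lt {x y : ℕ} (h : cf x < cf y) : x < y := by
  by_contra h'
  exact absurd (cf_mono (by omega : y ≤ x)) (by omega)

lemma cf_take {n t : ℕ} (ht : t ≤ (fibWord n).length) :
    ((fibWord n).take t).count false = cf t := by
  induction t with
  | zero => simp [cf]
  | succ t ih =>
    have ht' : t < (fibWord n).length := by omega
    have e : (fibWord n).take (t+1) = (fibWord n).take t ++ [(fibWord n).getD t false] := by
      rw [List.take_succ]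
      simp [List.getD_eq_getElem _ false ht', List.getElem?_eq_getElem ht']
    rw [e, List.count_append, ih (by omega), stab ht', cf_succ]
    cases F t <;> simp

/-- Key block decomposition facts. -/
lemma FD (t : ℕ) : F (D t) = false ∧ F (D t + 1) = !(F t) := by
  set w := fibWord (t+2) with hw
  have hlen : t + 3 ≤ w.length := fibWord_length (t+2)
  have ht1 : t < w.length := by omega
  have hdec : w = w.take t ++ w.getD t false :: w.drop (t+1) := by
    conv_lhs => rw [← List.take_append_drop t w, List.drop_eq_getElem_cons ht1]
    rw [List.getD_eq_getElem w false ht1]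
  have hFt : w.getD t false = F t := stab ht1
  have hA : ((w.take t).flatMap phi).length = D t := by
    rw [flatMap_phi_length, cf_take (le_of_lt ht1), List.length_take]
    simp [D]; omega
  have hdrop : w.drop (t+1) ≠ [] := by
    intro h
    have := congrArg List.length h
    simp at this; omega
  set B := (w.drop (t+1)).flatMap phi with hB
  have hBh : B.getD 0 false = false ∧ 1 ≤ B.length := flatMap_head _ hdrop
  have hfw : fibWord (t+3) = (w.take t).flatMap phi ++ (phi (F t) ++ B) := by
    show w.flatMap phi = _
    conv_lhs => rw [hdec]
    rw [List.flatMap_append, List.flatMap_cons, hFt]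
  have hlen3 : (fibWord (t+3)).length = D t + ((phi (F t)).length + B.length) := by
    rw [hfw, List.length_append, List.length_append, hA]
  have hphi1 : 1 ≤ (phi (F t)).length := List.length_pos_iff.2 (phi_ne_nil _)
  constructor
  · have hin : D t < (fibWord (t+3)).length := by omega
    rw [← stab hin, hfw,
      List.getD_append_right _ _ _ _ (by omega : ((w.take t).flatMap phi).length ≤ D t)]
    rw [hA, Nat.sub_self]
    rw [List.getD_append _ _ _ _ (by omega : 0 < (phi (F t)).length)]
    exact phi_head _
  · have hin : D t + 1 < (fibWord (t+3)).length := by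
      cases hft : F t
      · have : (phi (F t)).length = 2 := by rw [hft]; rfl
        omega
      · have : (phi (F t)).length = 1 := by rw [hft]; rfl
        omega
    rw [← stab hin, hfw,
      List.getD_append_right _ _ _ _ (by omega : ((w.take t).flatMap phi).length ≤ D t + 1)]
    rw [hA, show D t + 1 - D t = 1 from by omega]
    cases hft : F t
    · rw [List.getD_append _ _ _ _ (by simp [phi])]
      simp [phi]
    · rw [List.getD_append_right _ _ _ _ (by simp [phi])]
      simpa [phi, List.getD] using hBh.1

lemma F_D (t : ℕ) : F (D t) = false := (FD t).1
lemma F_D1 (t : ℕ) : F (D t + 1) = !(F t) := (FD t).2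

lemma D_succ (t : ℕ) : D (t+1) = D t + (bif F t then 1 else 2) := by
  show t + 1 + cf (t+1) = t + cf t + _
  rw [cf_succ]; cases F t <;> simp <;> omega

lemma coverage (n : ℕ) : (∃ t, n = D t) ∨ (∃ t, n = D t + 1 ∧ F t = false) := by
  induction n with
  | zero => exact Or.inl ⟨0, rfl⟩
  | succ n ih =>
    rcases ih with ⟨t, rfl⟩ | ⟨t, rfl, hft⟩
    · cases hft : F t
      · exact Or.inr ⟨t, rfl, hft⟩
      · refine Or.inl ⟨t+1, ?_⟩
        rw [D_succ, hft]; rfl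
    · refine Or.inl ⟨t+1, ?_⟩
      rw [D_succ, hft]; rfl

lemma nobb {n : ℕ} (h : F n = true) : F (n+1) = false := by
  rcases coverage n with ⟨t, rfl⟩ | ⟨t, rfl, hft⟩
  · rw [F_D t] at h; exact absurd h (by simp)
  · have : D (t+1) = D t + 2 := by rw [D_succ, hft]; rfl
    have : F (D t + 1 + 1) = F (D (t+1)) := by rw [this]
    rw [this, F_D]

lemma bpred {n : ℕ} (h : F n = true) : ∃ m, n = m + 1 ∧ F m = false := by
  rcases coverage n with ⟨t, rfl⟩ | ⟨t, rfl, hft⟩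
  · rw [F_D t] at h; exact absurd h (by simp)
  · exact ⟨D t, rfl, F_D t⟩

lemma noaaa {n : ℕ} (h0 : F n = false) (h1 : F (n+1) = false) : F (n+2) = true := by
  rcases coverage (n+1) with ⟨u, hu⟩ | ⟨u, hu, hfu⟩
  · -- n+1 = D u
    rcases coverage n with ⟨t, hn⟩ | ⟨t, hn, hft⟩
    · -- n = D t, n+1 = D u : step of size 1, so F t = true
      have hstep : D (t+1) = D t + (bif F t then 1 else 2) := D_succ t
      have hut : u = t + 1 := by
        have hmono : ∀ a b, a < b → D a < D b := by
          intro a b hab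
          have : ∀ c, D c < D (c+1) := by
            intro c; rw [D_succ]; cases F c <;> simp
          have : ∀ d, D a < D (a + d + 1) := by
            intro d; induction d with
            | zero => exact this a
            | succ d ih => exact lt_trans ih (by simpa [show a+(d+1)+1 = (a+d+1)+1 from by omega] using this (a+d+1))
          have := this (b - a - 1)
          simpa [show a + (b-a-1) + 1 = b from by omega] using this
        rcases Nat.lt_trichotomy u (t+1) with h' | h' | h'
        · have : u ≤ t := by omega
          rcases Nat.lt_or_ge u t with h'' | h''
          · have := hmono u t h''; omega
          · have : u = t := by omega
            rw [this] at hu; omega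
        · exact h'
        · have := hmono (t+1) u h'
          rw [hstep] at this
          cases hft : F t <;> rw [hft] at this <;> simp at this <;> omega
      have hFt : F t = true := by
        rw [hut] at hu
        rw [hstep] at hu
        cases hft : F t
        · rw [hft] at hu; simp at hu; omega
        · rfl
      -- now n = D t, F t = true; F (n+1) = F (D (t+1)), n+2 = D(t+1)+1
      have hDt1 : D (t+1) = D t + 1 := by rw [hstep, hFt]; rfl
      have h2 : F (D (t+1) + 1) = !(F (t+1)) := F_D1 (t+1)
      have : F (n+2) = !(F (t+1)) := by
        rw [hn, show D t + 2 = D (t+1) + 1 from by omega] at *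
        exact h2
      rw [this]
      cases hft1 : F (t+1)
      · -- F t = true, F (t+1) = false would make F(n+2)=true anyway
        simp
      · exfalso
        have := nobb hFt
        rw [hft1] at this
        exact absurd this (by simp)
    · -- n = D t + 1 with F t = false: then F n = true, contra
      have := F_D1 t
      rw [← hn, hft] at this
      rw [h0] at this; simp at this
  · -- n+1 = D u + 1 with F u = false: F (n+1) = true, contra
    have := F_D1 u
    rw [← hu, hfu] at this
    rw [h1] at this; simp at this

lemma cfD (t : ℕ) : cf (D t) = t := by
  induction t with
  | zero => rfl
  | succ t ih =>
    rw [D_succ]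
    cases hft : F t
    · simp only [cond]
      rw [show D t + 2 = (D t + 1) + 1 from rfl, cf_succ_true (by rw [F_D1 t, hft]; rfl),
        cf_succ_false (F_D t), ih]
    · simp only [cond]
      rw [cf_succ_false (F_D t), ih]

lemma Dcf {x : ℕ} (h : F x = false) : D (cf x) = x := by
  rcases coverage x with ⟨t, rfl⟩ | ⟨t, rfl, hft⟩
  · rw [cfD]
  · have := F_D1 t
    rw [h, hft] at this; simp at this


lemma bool_not_inj {a b : Bool} (h : (!a) = (!b)) : a = b := by
  cases a <;> cases b <;> simp_all

theorem noStr : ∀ p, 1 ≤ p → ∀ i, ¬ (∀ k, k < 3*p - 1 → F (i + k + p) = F (i + k)) := by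
  intro p
  induction p using Nat.strong_induction_on with
  | _ p ih =>
    intro hp i H
    by_cases hp2 : p = 1
    · subst hp2
      have h0 : F (i+1) = F i := H 0 (by omega)
      have h1 : F (i+2) = F (i+1) := H 1 (by omega)
      cases hfi : F i
      · have h2 := noaaa hfi (by rw [h0, hfi])
        rw [h1, h0, hfi] at h2
        simp at h2
      · have h2 := nobb hfi
        rw [h0, hfi] at h2
        simp at h2
    · have hpge : 2 ≤ p := by omega
      have Hx : ∀ x, i ≤ x → x < i + (3*p-1) → F (x + p) = F x := by
        intro x h1 h2
        have h3 := H (x - i) (by omega)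
        rw [show i + (x-i) = x from by omega] at h3
        exact h3
      have hcq : cf i ≤ cf (i+p) := cf_mono (by omega)
      set q := cf (i+p) - cf i with hqdef
      have hq : cf (i+p) = cf i + q := by omega
      have Ww : ∀ d, d ≤ 3*p-1 → cf (i+d+p) = cf (i+d) + q := by
        intro d
        induction d with
        | zero => intro _; exact hq
        | succ d ihd =>
          intro hd
          have h1 := ihd (by omega)
          have hf : F (i+d+p) = F (i+d) := Hx (i+d) (by omega) (by omega)
          have e1 : cf (i+d+p+1) = cf (i+d+p) + (bif F (i+d+p) then 0 else 1) := cf_succ _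
          have e2 : cf (i+d+1) = cf (i+d) + (bif F (i+d) then 0 else 1) := cf_succ _
          rw [show i+(d+1)+p = i+d+p+1 from by omega, e1, hf,
            show i+(d+1) = i+d+1 from by omega, e2]
          cases hb : F (i+d) <;> simp <;> omega
      have hq1 : 1 ≤ q := by
        have h2 : cf i + 1 ≤ cf (i+2) := by
          cases hfi : F i
          · have e := cf_succ_false hfi
            have := cf_mono (show i+1 ≤ i+2 from by omega)
            omega
          · have hfi1 : F (i+1) = false := nobb hfi
            have e := cf_succ_false hfi1
            have := cf_mono (show i ≤ i+1 from by omega)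
            rw [show i+1+1 = i+2 from by omega] at e
            omega
        have := cf_mono (show i+2 ≤ i+p from by omega)
        omega
      have hq2 : q < p := by
        have hy : ∃ y, i ≤ y ∧ y < i + p ∧ F y = true := by
          cases hfi : F i
          · cases hfi1 : F (i+1)
            · have h2 := noaaa hfi hfi1
              rcases Nat.lt_or_ge (i+2) (i+p) with h' | h'
              · exact ⟨i+2, by omega, h', h2⟩
              · exfalso
                have hx := Hx i (le_refl i) (by omega)
                rw [show i + p = i + 2 from by omega, hfi] at hx
                rw [hx] at h2
                simp at h2
            · exact ⟨i+1, by omega, by omega, hfi1⟩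
          · exact ⟨i, le_refl i, by omega, hfi⟩
        obtain ⟨y, hy1, hy2, hy3⟩ := hy
        have c1 : cf y ≤ cf i + (y - i) := by
          have := cf_add_le i (y-i)
          rwa [show i + (y-i) = y from by omega] at this
        have c2 : cf (y+1) = cf y := cf_succ_true hy3
        have c3 : cf (i+p) ≤ cf (y+1) + (i+p-(y+1)) := by
          have := cf_add_le (y+1) (i+p-(y+1))
          rwa [show (y+1) + (i+p-(y+1)) = i+p from by omega] at this
        omega
      have Gt : ∀ t, cf i ≤ t → t < cf (i + 3*p - 2) → F (t+q) = F t := by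
        intro t h1 h2
        have hsF : F (D t) = false := F_D t
        have hcs : cf (D t) = t := cfD t
        set s := D t with hs
        have hsi : i ≤ s := by
          by_contra h'
          have hs1 : s + 1 ≤ i := by omega
          have m1 := cf_mono hs1
          have m2 := cf_succ_false hsF
          omega
        have hs2 : s < i + 3*p - 2 := lt_of_cf_lt (by omega)
        have hsp : F (s+p) = F s := Hx s hsi (by omega)
        have hs1p : F (s+1+p) = F (s+1) := Hx (s+1) (by omega) (by omega)
        have hcsp : cf (s+p) = cf s + q := by
          have := Ww (s-i) (by omega)
          rwa [show i + (s-i) = s from by omega] at this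
        have hDtq : D (t+q) = s + p := by
          have hfsp : F (s+p) = false := by rw [hsp, hsF]
          have e : cf (s+p) = t + q := by omega
          rw [← e]
          exact Dcf hfsp
        have e1 : F (s+1) = !(F t) := F_D1 t
        have e2 : F (s+p+1) = !(F (t+q)) := by
          have := F_D1 (t+q)
          rwa [hDtq] at this
        apply bool_not_inj
        rw [← e2, ← e1, show s+p+1 = s+1+p from by omega, hs1p]
      have c3p : cf (i + 3*p) = cf i + 3*q := by
        have w1 := Ww p (by omega)
        have w2 := Ww (2*p) (by omega)
        rw [show i+p+p = i+2*p from by omega] at w1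
        rw [show i+2*p+p = i+3*p from by omega] at w2
        omega
      set Y1 := i + 3*p - 2 with hY1
      have hY3 : Y1 + 2 = i + 3*p := by omega
      by_cases hb : F Y1 = false ∧ F (Y1+1) = false
      · obtain ⟨hb1, hb2⟩ := hb
        have s1 : cf (Y1+1) = cf Y1 + 1 := cf_succ_false hb1
        have s2 : cf (Y1+2) = cf (Y1+1) + 1 := cf_succ_false hb2
        have hcfY1 : cf Y1 + 2 = cf i + 3*q := by
          rw [hY3] at s2
          omega
        cases hfi : F i
        · -- bb contradiction downstairs
          have hu : D (cf Y1) = Y1 := Dcf hb1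
          have hu1 : D (cf (Y1+1)) = Y1 + 1 := Dcf hb2
          have e1 : F (Y1+1) = !(F (cf Y1)) := by
            have := F_D1 (cf Y1)
            rwa [hu] at this
          have hFu : F (cf Y1) = true := by
            rw [hb2] at e1
            cases h : F (cf Y1)
            · rw [h] at e1; simp at e1
            · rfl
          have e2 : F (Y1+1+1) = !(F (cf (Y1+1))) := by
            have := F_D1 (cf (Y1+1))
            rwa [hu1] at this
          have hF3p : F (i + 3*p) = false := by
            have t2 := Hx (i+2*p) (by omega) (by omega)
            have t1 := Hx (i+p) (by omega) (by omega)
            have t0 := Hx i (by omega) (by omega)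
            rw [show i+2*p+p = i+3*p from by omega] at t2
            rw [show i+p+p = i+2*p from by omega] at t1
            rw [t2, t1, t0, hfi]
          have hFu1 : F (cf (Y1+1)) = true := by
            rw [show Y1+1+1 = i+3*p from by omega, hF3p] at e2
            cases h : F (cf (Y1+1))
            · rw [h] at e2; simp at e2
            · rfl
          have hnb := nobb hFu
          rw [← s1] at hnb
          rw [hnb] at hFu1
          simp at hFu1
        · -- F i = true : extend left
          obtain ⟨m, him, hFm⟩ := bpred hfi
          have hrm : cf i = cf m + 1 := by
            rw [him, cf_succ_false hFm]
          have K : ∀ k, k < 3*q-1 → F (cf m + k + q) = F (cf m + k) := by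
            intro k hk
            by_cases hk0 : k = 0
            · subst hk0
              have hFip : F (i+p) = true := by
                have := Hx i (le_refl i) (by omega)
                rw [this, hfi]
              have hFmp : F (m+p) = false := by
                obtain ⟨m', hm', hFm'⟩ := bpred hFip
                have : m' = m + p := by omega
                rwa [this] at hFm'
              have hcfmp : cf (m+p) = cf m + q := by
                have e := cf_succ_false hFmp
                rw [show m+p+1 = i+p from by omega] at e
                omega
              have d1 : D (cf m) = m := Dcf hFm
              have d2 : D (cf m + q) = m + p := by
                rw [← hcfmp]
                exact Dcf hFmp
              have e1 : F (m+1) = !(F (cf m)) := by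
                have := F_D1 (cf m)
                rwa [d1] at this
              have e2 : F (m+p+1) = !(F (cf m + q)) := by
                have := F_D1 (cf m + q)
                rwa [d2] at this
              rw [← him, hfi] at e1
              rw [show m+p+1 = i+p from by omega, hFip] at e2
              show F (cf m + 0 + q) = F (cf m + 0)
              rw [show cf m + 0 + q = cf m + q from by omega, show cf m + 0 = cf m from by omega]
              apply bool_not_inj
              rw [← e1, ← e2]
            · have := Gt (cf m + k) (by omega) (by omega)
              exact this
          exact ih q hq2 hq1 (cf m) K
      · have hb' : F Y1 = true ∨ F (Y1+1) = true := by
          cases h1 : F Y1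
          · cases h2 : F (Y1+1)
            · exact absurd ⟨h1, h2⟩ hb
            · exact Or.inr rfl
          · exact Or.inl rfl
        have hcfY1 : cf Y1 + 1 = cf i + 3*q := by
          cases hb1 : F Y1
          · have hb2 : F (Y1+1) = true := by
              rcases hb' with h | h
              · rw [hb1] at h; simp at h
              · exact h
            have s1 : cf (Y1+1) = cf Y1 + 1 := cf_succ_false hb1
            have s2 : cf (Y1+2) = cf (Y1+1) := cf_succ_true hb2
            rw [hY3] at s2
            omega
          · have hb2 : F (Y1+1) = false := nobb hb1
            have s1 : cf (Y1+1) = cf Y1 := cf_succ_true hb1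
            have s2 : cf (Y1+2) = cf (Y1+1) + 1 := cf_succ_false hb2
            rw [hY3] at s2
            omega
        have K : ∀ k, k < 3*q-1 → F (cf i + k + q) = F (cf i + k) := by
          intro k hk
          exact Gt (cf i + k) (by omega) (by omega)
        exact ih q hq2 hq1 (cf i) K


lemma listPow_succ (g : List Bool) (m : ℕ) : listPow g (m+1) = g ++ listPow g m := by
  simp [listPow, List.replicate_succ]

lemma listPow_length (g : List Bool) (m : ℕ) : (listPow g m).length = m * g.length := by
  induction m with
  | zero => simp [listPow]
  | succ m ihm => rw [listPow_succ, List.length_append, ihm]; ring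

lemma listPow_getD (g : List Bool) (hg : g ≠ []) :
    ∀ m k, k < m * g.length → (listPow g m).getD k false = g.getD (k % g.length) false := by
  intro m
  induction m with
  | zero => intro k hk; omega
  | succ m ihm =>
    intro k hk
    rw [listPow_succ]
    rcases Nat.lt_or_ge k g.length with h | h
    · rw [List.getD_append _ _ _ _ h, Nat.mod_eq_of_lt h]
    · rw [List.getD_append_right _ _ _ _ h]
      rw [ihm (k - g.length) (by
        have e : (m+1) * g.length = m * g.length + g.length := by ring
        omega)]
      congr 1
      conv_rhs => rw [show k = (k - g.length) + g.length from by omega]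
      rw [Nat.add_mod_right]

theorem noFourth (g : List Bool) (hg : g ≠ []) (n : ℕ) : ¬ (listPow g 4 <:+: fibWord n) := by
  intro hinf
  obtain ⟨s, t, hst⟩ := hinf
  set p := g.length with hpdef
  have hp : 1 ≤ p := List.length_pos_iff.2 hg
  have hlen4 : (listPow g 4).length = 4*p := by rw [listPow_length]
  have hflen : (fibWord n).length = s.length + ((listPow g 4).length + t.length) := by
    rw [← hst]; simp
  have key : ∀ k, k < 4*p → F (s.length + k) = g.getD (k % p) false := by
    intro k hk
    have h1 : s.length + k < (fibWord n).length := by omega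
    rw [← stab h1, ← hst, List.append_assoc]
    rw [List.getD_append_right _ _ _ _ (by omega : s.length ≤ s.length + k)]
    rw [show s.length + k - s.length = k from by omega]
    rw [List.getD_append _ _ _ _ (by omega : k < (listPow g 4).length)]
    exact listPow_getD g hg 4 k (by omega)
  have K : ∀ k, k < 3*p - 1 → F (s.length + k + p) = F (s.length + k) := by
    intro k hk
    rw [show s.length + k + p = s.length + (k+p) from by omega]
    rw [key (k+p) (by omega), key k (by omega), Nat.add_mod_right]
  exact noStr p hp s.length K

end FibAux

/-- the Fibonacci word contains no fourth power. -/
theorem stmt8 (g : List Bool) (hg : g ≠ []) : ¬ FibFactor (listPow g 4) := by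
  rintro ⟨n, hinf⟩
  exact FibAux.noFourth g hg n hinf
end
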